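/- Let X be a V-space with uniformly vanishing asymmetry, and let F, G be Cauchy filters on X with d(F,G) = 0. Then the intersection F ∩ G is also a Cauchy filter. -/
import Mathlib


open Filter Set

/-- `a` is well-above `b`: for every `S` with `sInf S ≤ b` some `s ∈ S` satisfies `s ≤ a`. -/
def WellAbove {V : Type*} [CompleteLattice V] (a b : V) : Prop :=
  ∀ S : Set V, sInf S ≤ b → ∃ s ∈ S, s ≤ a

/-- Flagg's value quantales (bottom element plays the role of `0`). -/
class ValueQuantale (V : Type*) extends CompleteLattice V, Add V where
  add_comm' : ∀ a b : V, a + b = b + a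
  add_assoc' : ∀ a b c : V, a + b + c = a + (b + c)
  add_bot' : ∀ a : V, a + ⊥ = a
  sInf_wellAbove : ∀ x : V, x = sInf {y | WellAbove y x}
  add_sInf' : ∀ (x : V) (S : Set V), x + sInf S = sInf ((x + ·) '' S)
  inf_wellAbove_bot : ∀ a b : V, WellAbove a ⊥ → WellAbove b ⊥ → WellAbove (a ⊓ b) ⊥

variable {V : Type*} [ValueQuantale V] {X : Type*}

/-- n-fold sum `n·δ`. -/
def nmul : ℕ → V → V
  | 0, _ => ⊥
  | n + 1, δ => δ + nmul n δ

/-- The ball `B_ε(x)`. -/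
def ball' (d : X → X → V) (ε : V) (x : X) : Set X := {y | d x y ≤ ε}

/-- The op-ball `B^ε(x)`. -/
def opBall (d : X → X → V) (ε : V) (x : X) : Set X := {y | d y x ≤ ε}

/-- `B_ε(S)`. -/
def ballSet (d : X → X → V) (ε : V) (S : Set X) : Set X := ⋃ s ∈ S, ball' d ε s

/-- Cauchy filter on a `V`-space. -/
def IsCauchyF (d : X → X → V) (F : Filter X) : Prop :=
  ∀ ε : V, WellAbove ε ⊥ → ∃ x : X, ball' d ε x ∈ F

/-- op-Cauchy filter on a `V`-space. -/
def IsOpCauchyF (d : X → X → V) (F : Filter X) : Prop :=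
  ∀ ε : V, WellAbove ε ⊥ → ∃ x : X, opBall d ε x ∈ F

/-- Round filter. -/
def IsRound (d : X → X → V) (F : Filter X) : Prop :=
  ∀ F₀ ∈ F, ∃ ε : V, WellAbove ε ⊥ ∧ ∀ x : X, ball' d ε x ∈ F → ball' d ε x ⊆ F₀

/-- Minimal Cauchy filter: Cauchy with no proper Cauchy subfilter.
(A subfilter `G ⊆ F` in the set-of-sets sense corresponds to `G.sets ⊆ F.sets`.) -/
def IsMinCauchy (d : X → X → V) (F : Filter X) : Prop :=
  IsCauchyF d F ∧ ∀ G : Filter X, IsCauchyF d G → G.sets ⊆ F.sets → G = F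

/-- `F_≻`: the filter generated by the sets `B_ε(F₀)`, `F₀ ∈ F`, `ε ≻ 0`. -/
def roundify (d : X → X → V) (F : Filter X) : Filter X :=
  Filter.generate {S | ∃ F₀ ∈ F, ∃ ε : V, WellAbove ε ⊥ ∧ S = ballSet d ε F₀}

/-- Uniformly vanishing asymmetry. -/
def UVA (d : X → X → V) : Prop :=
  ∀ ε : V, WellAbove ε ⊥ → ∃ δ : V, WellAbove δ ⊥ ∧ ∀ x y : X, d y x ≤ δ → d x y ≤ ε

/-- Distance between subsets: `d(S,T) = ⋀_{s∈S,t∈T} d(s,t)`. -/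
def distSet (d : X → X → V) (S T : Set X) : V := ⨅ s ∈ S, ⨅ t ∈ T, d s t

/-- Distance between filters: `d(F,G) = ⋁_{F₀∈F,G₀∈G} d(F₀,G₀)`. -/
def distF (d : X → X → V) (F G : Filter X) : V :=
  ⨆ F₀ ∈ F, ⨆ G₀ ∈ G, distSet d F₀ G₀

/-- `F_x`, the filter generated by the balls `B_ε(x)`, `ε ≻ 0`. -/
def ptFilter (d : X → X → V) (x : X) : Filter X :=
  Filter.generate {S | ∃ ε : V, WellAbove ε ⊥ ∧ S = ball' d ε x}

/-- `F^x`, the filter generated by the op-balls `B^ε(x)`, `ε ≻ 0`. -/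
def opPtFilter (d : X → X → V) (x : X) : Filter X :=
  Filter.generate {S | ∃ ε : V, WellAbove ε ⊥ ∧ S = opBall d ε x}

lemma vq_add_le_left (x : V) {a b : V} (h : a ≤ b) : x + a ≤ x + b := by
  have hinf : sInf {a, b} = a := by
    rw [sInf_pair]; exact inf_eq_left.mpr h
  have := ValueQuantale.add_sInf' x {a, b}
  rw [hinf] at this
  rw [this]
  exact sInf_le ⟨b, by simp, rfl⟩

lemma vq_add_le_add {a b c e : V} (h1 : a ≤ b) (h2 : c ≤ e) : a + c ≤ b + e := by
  calc a + c ≤ a + e := vq_add_le_left a h2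
    _ = e + a := ValueQuantale.add_comm' a e
    _ ≤ e + b := vq_add_le_left e h1
    _ = b + e := ValueQuantale.add_comm' e b

lemma vq_halve {ε : V} (hε : WellAbove ε ⊥) :
    ∃ δ : V, WellAbove δ ⊥ ∧ δ + δ ≤ ε := by
  set S : Set V := {y | WellAbove y ⊥} with hS
  set T : Set V := {v | ∃ y ∈ S, ∃ z ∈ S, v = y + z} with hT
  have hbot : (⊥ : V) = sInf S := ValueQuantale.sInf_wellAbove ⊥
  have hTle : sInf T ≤ ⊥ := by
    have h1 : (⊥ : V) = sInf S + sInf S := by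
      conv_lhs => rw [← ValueQuantale.add_bot' (⊥ : V)]
      rw [hbot]
    have h2 : sInf S + sInf S = sInf ((sInf S + ·) '' S) :=
      ValueQuantale.add_sInf' (sInf S) S
    have h3 : sInf T ≤ sInf ((sInf S + ·) '' S) := by
      apply le_sInf
      rintro v ⟨s, hs, rfl⟩
      have : sInf S + s = sInf ((s + ·) '' S) := by
        rw [ValueQuantale.add_comm']; exact ValueQuantale.add_sInf' s S
      show sInf T ≤ sInf S + s
      rw [this]
      apply le_sInf
      rintro w ⟨t, ht, rfl⟩
      exact sInf_le ⟨s, hs, t, ht, rfl⟩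
    rw [h1, h2]; exact h3
  obtain ⟨v, ⟨y, hy, z, hz, rfl⟩, hv⟩ := hε T hTle
  refine ⟨y ⊓ z, ValueQuantale.inf_wellAbove_bot y z hy hz, ?_⟩
  exact le_trans (vq_add_le_add inf_le_left inf_le_right) hv

/-- If `F`, `G` are Cauchy filters with `d(F,G) = 0` then their intersection
(which, as a set of sets, is the filter `F ⊔ G`) is Cauchy. -/
theorem stmt15 (d : X → X → V) (hrefl : ∀ x, d x x = ⊥)
    (htri : ∀ x y z, d x z ≤ d x y + d y z) (hUVA : UVA d)
    (F G : Filter X) (hF : IsCauchyF d F) (hG : IsCauchyF d G)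
    (h0 : distF d F G = ⊥) :
    IsCauchyF d (F ⊔ G) := by
  intro ε hε
  -- get δ ≻ 0 with δ + δ + δ ≤ ε
  obtain ⟨δ₁, hδ₁, hδ₁ε⟩ := vq_halve hε
  obtain ⟨δ, hδ, hδδ₁⟩ := vq_halve hδ₁
  have hδle : δ ≤ δ₁ := by
    calc δ = δ + ⊥ := (ValueQuantale.add_bot' δ).symm
      _ ≤ δ + δ := vq_add_le_left δ bot_le
      _ ≤ δ₁ := hδδ₁
  have h3δ : δ + δ + δ ≤ ε := by
    calc δ + δ + δ ≤ δ₁ + δ := vq_add_le_add hδδ₁ le_rfl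
      _ ≤ δ₁ + δ₁ := vq_add_le_left δ₁ hδle
      _ ≤ ε := hδ₁ε
  -- UVA for δ
  obtain ⟨η, hη, hηδ⟩ := hUVA δ hδ
  set θ := δ ⊓ η with hθdef
  have hθ : WellAbove θ ⊥ := ValueQuantale.inf_wellAbove_bot δ η hδ hη
  obtain ⟨a, ha⟩ := hF θ hθ
  obtain ⟨b, hb⟩ := hG θ hθ
  -- d(B_θ a, B_θ b) = ⊥
  have hdist : distSet d (ball' d θ a) (ball' d θ b) ≤ ⊥ := by
    rw [← h0]
    exact le_trans (le_iSup₂ (f := fun G₀ _ => distSet d (ball' d θ a) G₀)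
      (ball' d θ b) hb)
      (le_iSup₂ (f := fun F₀ _ => ⨆ G₀ ∈ G, distSet d F₀ G₀) (ball' d θ a) ha)
  set S : Set V := {v | ∃ f ∈ ball' d θ a, ∃ g ∈ ball' d θ b, v = d f g} with hS
  have hSle : sInf S ≤ ⊥ := by
    refine le_trans ?_ hdist
    apply le_iInf₂; intro f hf
    apply le_iInf₂; intro g hg
    exact sInf_le ⟨f, hf, g, hg, rfl⟩
  obtain ⟨v, ⟨f, hfa, g, hgb, rfl⟩, hfg⟩ := hθ S hSle
  refine ⟨f, ?_⟩
  rw [Filter.mem_sup]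
  constructor
  · -- B_θ a ⊆ B_ε f, so B_ε f ∈ F
    apply Filter.mem_of_superset ha
    intro y hy
    have hfa' : d f a ≤ δ := hηδ f a (le_trans hfa inf_le_right)
    have : d f y ≤ d f a + d a y := htri f a y
    have h1 : d f y ≤ δ + δ := le_trans this (vq_add_le_add hfa' (le_trans hy inf_le_left))
    have h2 : δ + δ ≤ ε := by
      calc δ + δ = δ + δ + ⊥ := (ValueQuantale.add_bot' _).symm
        _ ≤ δ + δ + δ := vq_add_le_left _ bot_le
        _ ≤ ε := h3δ
    exact le_trans h1 h2
  · -- B_θ b ⊆ B_ε f, so B_ε f ∈ G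
    apply Filter.mem_of_superset hb
    intro y hy
    have hgb' : d g b ≤ δ := hηδ g b (le_trans hgb inf_le_right)
    have h1 : d f y ≤ d f g + d g y := htri f g y
    have h2 : d g y ≤ d g b + d b y := htri g b y
    have : d f y ≤ δ + (δ + δ) := le_trans h1 (vq_add_le_add (le_trans hfg inf_le_left)
      (le_trans h2 (vq_add_le_add hgb' (le_trans hy inf_le_left))))
    rw [← ValueQuantale.add_assoc'] at this
    exact le_trans this h3δ
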